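/- arXiv:math/0602318 — 2 statements merged into one kernel-verified Lean document; each statement's English description precedes it below -/
import Mathlib

section
/- Let H be a bounded normal operator A on a complex Hilbert space H satisfying A² = 2μA + νI with μ² + ν ≠ 0, let λ₁, λ₂ be the (distinct) roots of z² − 2μz − ν = 0, and suppose both eigenspaces ker(A − λ₁I) and ker(A − λ₂I) are infinite-dimensional. Let c₁, …, c_k be nonzero real numbers and ‖c‖ = Σⱼ |cⱼ|. Then the c-numerical range of A is the closed line segment joining the points μ·(Σⱼ cⱼ) + ((λ₁ − λ₂)/2)·‖c‖ and μ·(Σⱼ cⱼ) − ((λ₁ − λ₂)/2)·‖c‖; that is, W_c(A) = { μ·(Σⱼ cⱼ) + t·((λ₁ − λ₂)/2)·‖c‖ : t ∈ [−1, 1] }. -/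
/-!
A normal operator with `(A - λ₁)(A - λ₂) = 0` and `λ₁ ≠ λ₂` splits `H` into the orthogonal
eigenspaces of `λ₁` and `λ₂`. Writing a unit vector as `x = u + v` accordingly gives
`⟪x, A x⟫ = λ₁‖u‖² + λ₂‖v‖² = μ + s (λ₁ - λ₂) / 2` with `s = ‖u‖² - ‖v‖² ∈ [-1, 1]`, so
`W_c(A) ⊆ μ Σ cⱼ + ((λ₁ - λ₂) / 2) {Σ cⱼ sⱼ : sⱼ ∈ [-1, 1]}`, and the last set is
`[-‖c‖, ‖c‖]`. Conversely, since both eigenspaces are infinite-dimensional they contain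
orthonormal families `eⱼ`, `fⱼ`, and the orthonormal vectors `√((1 + sⱼ)/2) eⱼ + √((1 - sⱼ)/2) fⱼ`
realise every choice of `sⱼ ∈ [-1, 1]`.
-/

open scoped ComplexInnerProductSpace InnerProductSpace

theorem exists_sum_mul_eq_iff_exists_mul_sum_abs_eq {ι : Type*} [Fintype ι] (c : ι → ℝ) (r : ℝ) :
    (∃ s : ι → ℝ, (∀ j, s j ∈ Set.Icc (-1) 1) ∧ ∑ j, c j * s j = r) ↔
      ∃ t ∈ Set.Icc (-1 : ℝ) 1, t * ∑ j, |c j| = r := by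
  constructor
  · rintro ⟨s, hs, rfl⟩
    have hle : |∑ j, c j * s j| ≤ ∑ j, |c j| := by
      refine (Finset.abs_sum_le_sum_abs _ _).trans (Finset.sum_le_sum fun j _ => ?_)
      rw [abs_mul]
      exact mul_le_of_le_one_right (abs_nonneg _) (abs_le.mpr (hs j))
    have hN : 0 ≤ ∑ j, |c j| := Finset.sum_nonneg fun j _ => abs_nonneg _
    -- for `∑ |c j| = 0` this is `t = 0 / 0 = 0`
    refine ⟨(∑ j, c j * s j) / ∑ j, |c j|, abs_le.mp ?_, ?_⟩
    · rw [abs_div, abs_of_nonneg hN]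
      exact div_le_one_of_le₀ hle hN
    · rcases hN.eq_or_lt with h | h
      · rw [← h, mul_zero, eq_comm, ← abs_nonpos_iff, h]
        exact hle
      · exact div_mul_cancel₀ _ h.ne'
  · rintro ⟨t, ht, rfl⟩
    refine ⟨fun j => t * SignType.sign (c j), fun j => ?_, ?_⟩
    · obtain ⟨ht₁, ht₂⟩ := ht
      rcases lt_trichotomy (c j) 0 with h | h | h <;> simp [h] <;> constructor <;> linarith
    · simp only [Finset.mul_sum]
      exact Finset.sum_congr rfl fun j _ => by rw [mul_left_comm, self_mul_sign]

theorem sum_ofReal_mul_add_mul {ι : Type*} [Fintype ι] (c s : ι → ℝ) (m d : ℂ) :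
    ∑ j, (c j : ℂ) * (m + s j * d) = m * ∑ j, (c j : ℂ) + ((∑ j, c j * s j : ℝ) : ℂ) * d := by
  push_cast
  simp only [mul_add, Finset.sum_add_distrib, Finset.mul_sum, Finset.sum_mul]
  congr 1 <;> exact Finset.sum_congr rfl fun j _ => by ring

section Orthonormal

variable {𝕜 E ι : Type*} [RCLike 𝕜] [NormedAddCommGroup E] [InnerProductSpace 𝕜 E]

theorem exists_orthonormal_fin_of_not_finiteDimensional (hE : ¬ FiniteDimensional 𝕜 E) (n : ℕ) :
    ∃ f : Fin n → E, Orthonormal 𝕜 f := by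
  have hn : (n : Cardinal) ≤ Module.rank 𝕜 E :=
    Cardinal.natCast_lt_aleph0.le.trans (not_lt.mp (Module.rank_lt_aleph0_iff.not.mpr hE))
  obtain ⟨f, hf⟩ := exists_linearIndependent_of_le_rank hn
  exact ⟨_, InnerProductSpace.gramSchmidtNormed_orthonormal hf⟩

theorem Submodule.exists_orthonormal_fin_of_not_finiteDimensional (K : Submodule 𝕜 E)
    (hK : ¬ FiniteDimensional 𝕜 K) (n : ℕ) :
    ∃ f : Fin n → E, Orthonormal 𝕜 f ∧ ∀ i, f i ∈ K := by
  obtain ⟨f, hf⟩ := _root_.exists_orthonormal_fin_of_not_finiteDimensional hK n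
  exact ⟨fun i => f i, hf.comp_linearIsometry K.subtypeₗᵢ, fun i => (f i).2⟩

theorem Orthonormal.smul_add_smul {e f : ι → E} (he : Orthonormal 𝕜 e) (hf : Orthonormal 𝕜 f)
    (hef : ∀ i j, ⟪e i, f j⟫_𝕜 = 0) {a b : ι → 𝕜} (hab : ∀ j, ‖a j‖ ^ 2 + ‖b j‖ ^ 2 = 1) :
    Orthonormal 𝕜 fun j => a j • e j + b j • f j := by
  classical
  have hfe : ∀ i j, ⟪f i, e j⟫_𝕜 = 0 := fun i j => by rw [← inner_conj_symm, hef, map_zero]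
  rw [orthonormal_iff_ite] at he hf ⊢
  intro i j
  simp only [inner_add_left, inner_add_right, inner_smul_left, inner_smul_right, he, hf, hef, hfe,
    mul_zero, add_zero, zero_add]
  split_ifs with h
  · subst h
    simp only [mul_one, RCLike.mul_conj]
    exact_mod_cast hab i
  · simp

theorem ContinuousLinearMap.exists_orthonormal_eigenvectors {T : E →L[𝕜] E} {a : 𝕜}
    (h : ¬ FiniteDimensional 𝕜 (LinearMap.ker ((T - a • 1 : E →L[𝕜] E) : E →ₗ[𝕜] E))) (n : ℕ) :
    ∃ e : Fin n → E, Orthonormal 𝕜 e ∧ ∀ i, T (e i) = a • e i := by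
  obtain ⟨e, he, heK⟩ := Submodule.exists_orthonormal_fin_of_not_finiteDimensional _ h n
  refine ⟨e, he, fun i => ?_⟩
  simpa [sub_eq_zero] using heK i

end Orthonormal

section Normal

variable {𝕜 E : Type*} [RCLike 𝕜] [NormedAddCommGroup E] [InnerProductSpace 𝕜 E] [CompleteSpace E]
  {T : E →L[𝕜] E}

theorem IsStarNormal.adjoint_apply_eq_of_apply_eq_smul (hT : IsStarNormal T) {a : 𝕜} {x : E}
    (hx : T x = a • x) : ContinuousLinearMap.adjoint T x = (starRingEnd 𝕜 a) • x := by
  have hTa : IsStarNormal (T - a • 1) :=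
    Commute.isStarNormal_sub <| by
      simpa only [star_smul, star_one] using (Commute.one_right T).smul_right (star a)
  have := (ContinuousLinearMap.IsStarNormal.adjoint_apply_eq_zero_iff hTa x).mpr (by simp [hx])
  simpa [sub_eq_zero, ← ContinuousLinearMap.star_eq_adjoint, star_smul] using this

theorem IsStarNormal.inner_eq_zero_of_apply_eq_smul (hT : IsStarNormal T) {a b : 𝕜} (hab : a ≠ b)
    {x y : E} (hx : T x = a • x) (hy : T y = b • y) : ⟪x, y⟫_𝕜 = 0 := by
  have h : a * ⟪x, y⟫_𝕜 = b * ⟪x, y⟫_𝕜 := calc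
    a * ⟪x, y⟫_𝕜 = ⟪ContinuousLinearMap.adjoint T x, y⟫_𝕜 := by
      rw [hT.adjoint_apply_eq_of_apply_eq_smul hx, inner_smul_left, RCLike.conj_conj]
    _ = ⟪x, T y⟫_𝕜 := ContinuousLinearMap.adjoint_inner_left T y x
    _ = b * ⟪x, y⟫_𝕜 := by rw [hy, inner_smul_right]
  exact (mul_eq_mul_right_iff.mp h).resolve_left hab

end Normal

theorem LinearMap.exists_eigenvectors_add_eq_of_quadratic {K V : Type*} [Field K] [AddCommGroup V]
    [Module K V] (f : V →ₗ[K] V) {a b : K} (hab : a ≠ b)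
    (hf : ∀ x, f (f x) = (a + b) • f x - (a * b) • x) (x : V) :
    ∃ u v, f u = a • u ∧ f v = b • v ∧ u + v = x := by
  have hab' : a - b ≠ 0 := sub_ne_zero.mpr hab
  refine ⟨(a - b)⁻¹ • (f x - b • x), (a - b)⁻¹ • (a • x - f x), ?_, ?_, ?_⟩
  · simp only [map_smul, map_sub, hf]
    module
  · simp only [map_smul, map_sub, hf]
    module
  · rw [← smul_add, show f x - b • x + (a • x - f x) = (a - b) • x by module, smul_smul,
      inv_mul_cancel₀ hab', one_smul]

section QuadraticOperator

variable {H : Type*} [NormedAddCommGroup H] [InnerProductSpace ℂ H] {A : H →L[ℂ] H}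
  {μ lam₁ lam₂ : ℂ}

theorem inner_add_apply_add_of_eigenvectors {u v : H} (hu : A u = lam₁ • u)
    (hv : A v = lam₂ • v) (huv : ⟪u, v⟫ = 0) (hsum : lam₁ + lam₂ = 2 * μ)
    (hnorm : ‖u‖ ^ 2 + ‖v‖ ^ 2 = 1) :
    ⟪u + v, A (u + v)⟫ = μ + ((‖u‖ ^ 2 - ‖v‖ ^ 2 : ℝ) : ℂ) * ((lam₁ - lam₂) / 2) := by
  have hnorm' : (‖u‖ : ℂ) ^ 2 + (‖v‖ : ℂ) ^ 2 = 1 := by exact_mod_cast hnorm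
  have hvu : ⟪v, u⟫ = 0 := by rw [← inner_conj_symm, huv, map_zero]
  simp only [map_add, hu, hv, inner_add_left, inner_add_right, inner_smul_right, huv, hvu,
    inner_self_eq_norm_sq_to_K]
  push_cast
  linear_combination (lam₁ + lam₂) / 2 * hnorm' + hsum / 2

theorem exists_inner_apply_eq_of_quadratic [CompleteSpace H] (hA : IsStarNormal A)
    (hne : lam₁ ≠ lam₂) (hroots : ∀ x, A (A x) = (lam₁ + lam₂) • A x - (lam₁ * lam₂) • x)
    (hsum : lam₁ + lam₂ = 2 * μ) {x : H} (hx : ‖x‖ = 1) :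
    ∃ s ∈ Set.Icc (-1 : ℝ) 1, ⟪x, A x⟫ = μ + s * ((lam₁ - lam₂) / 2) := by
  obtain ⟨u, v, hu, hv, rfl⟩ :=
    (A : H →ₗ[ℂ] H).exists_eigenvectors_add_eq_of_quadratic hne hroots x
  have huv := hA.inner_eq_zero_of_apply_eq_smul hne hu hv
  have hnorm : ‖u‖ ^ 2 + ‖v‖ ^ 2 = 1 := by
    have := norm_add_sq_eq_norm_sq_add_norm_sq_of_inner_eq_zero u v huv
    rw [hx, one_mul] at this
    rw [sq, sq, this]
  refine ⟨_, ⟨?_, ?_⟩, inner_add_apply_add_of_eigenvectors hu hv huv hsum hnorm⟩ <;>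
    nlinarith [sq_nonneg ‖u‖, sq_nonneg ‖v‖]

theorem exists_orthonormal_inner_apply_eq {ι : Type*} {e f : ι → H} (he : Orthonormal ℂ e)
    (hf : Orthonormal ℂ f) (hAe : ∀ i, A (e i) = lam₁ • e i) (hAf : ∀ i, A (f i) = lam₂ • f i)
    (hef : ∀ i j, ⟪e i, f j⟫ = 0) (hsum : lam₁ + lam₂ = 2 * μ) (s : ι → ℝ)
    (hs : ∀ j, s j ∈ Set.Icc (-1) 1) :
    ∃ x : ι → H, Orthonormal ℂ x ∧ ∀ j, ⟪x j, A (x j)⟫ = μ + s j * ((lam₁ - lam₂) / 2) := by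
  set a : ι → ℂ := fun j => (Real.sqrt ((1 + s j) / 2) : ℂ)
  set b : ι → ℂ := fun j => (Real.sqrt ((1 - s j) / 2) : ℂ)
  have ha : ∀ j, ‖a j‖ ^ 2 = (1 + s j) / 2 := fun j => by
    rw [Complex.norm_real, Real.norm_eq_abs, sq_abs, Real.sq_sqrt (by linarith [(hs j).1])]
  have hb : ∀ j, ‖b j‖ ^ 2 = (1 - s j) / 2 := fun j => by
    rw [Complex.norm_real, Real.norm_eq_abs, sq_abs, Real.sq_sqrt (by linarith [(hs j).2])]
  have hab : ∀ j, ‖a j‖ ^ 2 + ‖b j‖ ^ 2 = 1 := fun j => by rw [ha, hb]; ring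
  refine ⟨fun j => a j • e j + b j • f j, he.smul_add_smul hf hef hab, fun j => ?_⟩
  have hnorm : ‖a j • e j‖ ^ 2 + ‖b j • f j‖ ^ 2 = 1 := by
    rw [norm_smul, norm_smul, he.1, hf.1, mul_one, mul_one, hab]
  rw [inner_add_apply_add_of_eigenvectors (by rw [map_smul, hAe, smul_comm])
    (by rw [map_smul, hAf, smul_comm]) (by rw [inner_smul_left, inner_smul_right, hef]; simp)
    hsum hnorm, norm_smul, norm_smul, he.1, hf.1, mul_one, mul_one, ha, hb]
  push_cast
  ring

end QuadraticOperator

theorem cNumericalRange_of_normal_quadratic_general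
    {H : Type*} [NormedAddCommGroup H] [InnerProductSpace ℂ H] [CompleteSpace H]
    (A : H →L[ℂ] H)
    (hnormal : ContinuousLinearMap.adjoint A ∘L A = A ∘L ContinuousLinearMap.adjoint A)
    (μ ν lam₁ lam₂ : ℂ)
    (hquad : A ^ 2 = (2 * μ) • A + ν • (1 : H →L[ℂ] H))
    (hdisc : μ ^ 2 + ν ≠ 0)
    (hsum : lam₁ + lam₂ = 2 * μ) (hprod : lam₁ * lam₂ = -ν)
    (hker₁ : ¬ FiniteDimensional ℂ (LinearMap.ker ((A - lam₁ • (1 : H →L[ℂ] H) : H →L[ℂ] H) : H →ₗ[ℂ] H)))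
    (hker₂ : ¬ FiniteDimensional ℂ (LinearMap.ker ((A - lam₂ • (1 : H →L[ℂ] H) : H →L[ℂ] H) : H →ₗ[ℂ] H)))
    (k : ℕ) (c : Fin k → ℝ) :
    {z : ℂ | ∃ x : Fin k → H, Orthonormal ℂ x ∧
        z = ∑ j, (c j : ℂ) * (inner ℂ (x j) (A (x j)) : ℂ)} =
      {z : ℂ | ∃ t : ℝ, t ∈ Set.Icc (-1 : ℝ) 1 ∧
        z = μ * ∑ j, (c j : ℂ) +
          (t : ℂ) * ((lam₁ - lam₂) / 2) * ((∑ j, |c j| : ℝ) : ℂ)} := by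
  have hne : lam₁ ≠ lam₂ := by
    rintro rfl
    exact hdisc (by linear_combination (-(μ + lam₁) / 2) * hsum + hprod)
  have hA : IsStarNormal A := ⟨hnormal⟩
  have hroots (x : H) : A (A x) = (lam₁ + lam₂) • A x - (lam₁ * lam₂) • x := by
    have := congr($hquad x)
    rw [hsum, hprod, neg_smul, sub_neg_eq_add]
    simpa [sq] using this
  ext z
  constructor
  · rintro ⟨x, hx, rfl⟩
    choose s hs hval using fun j => exists_inner_apply_eq_of_quadratic hA hne hroots hsum (hx.1 j)
    obtain ⟨t, ht, hts⟩ := (exists_sum_mul_eq_iff_exists_mul_sum_abs_eq c _).mp ⟨s, hs, rfl⟩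
    refine ⟨t, ht, ?_⟩
    simp only [hval, sum_ofReal_mul_add_mul, ← hts]
    push_cast
    ring
  · rintro ⟨t, ht, rfl⟩
    obtain ⟨s, hs, hst⟩ := (exists_sum_mul_eq_iff_exists_mul_sum_abs_eq c _).mpr ⟨t, ht, rfl⟩
    obtain ⟨e, he, hAe⟩ := ContinuousLinearMap.exists_orthonormal_eigenvectors hker₁ k
    obtain ⟨f, hf, hAf⟩ := ContinuousLinearMap.exists_orthonormal_eigenvectors hker₂ k
    have hef i j := hA.inner_eq_zero_of_apply_eq_smul hne (hAe i) (hAf j)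
    obtain ⟨x, hx, hval⟩ := exists_orthonormal_inner_apply_eq he hf hAe hAf hef hsum s hs
    refine ⟨x, hx, ?_⟩
    simp only [hval, sum_ofReal_mul_add_mul, hst]
    push_cast
    ring

/-- `c`-numerical range of a normal quadratic operator: if `A` is normal,
`A² = 2μA + νI` with `μ² + ν ≠ 0`, `λ₁, λ₂` are the (distinct) roots of
`z² - 2μz - ν = 0`, and both eigenspaces `ker(A - λᵢI)` are
infinite-dimensional, then `W_c(A)` is the closed line segment joining
`μ(Σcⱼ) + ((λ₁-λ₂)/2)‖c‖` and `μ(Σcⱼ) - ((λ₁-λ₂)/2)‖c‖`. -/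
theorem cNumericalRange_of_normal_quadratic
    {H : Type*} [NormedAddCommGroup H] [InnerProductSpace ℂ H] [CompleteSpace H]
    (A : H →L[ℂ] H)
    (hnormal : ContinuousLinearMap.adjoint A ∘L A = A ∘L ContinuousLinearMap.adjoint A)
    (μ ν lam₁ lam₂ : ℂ)
    (hquad : A ^ 2 = (2 * μ) • A + ν • (1 : H →L[ℂ] H))
    (hdisc : μ ^ 2 + ν ≠ 0)
    (hsum : lam₁ + lam₂ = 2 * μ) (hprod : lam₁ * lam₂ = -ν)
    (hker₁ : ¬ FiniteDimensional ℂ (LinearMap.ker ((A - lam₁ • (1 : H →L[ℂ] H) : H →L[ℂ] H) : H →ₗ[ℂ] H)))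
    (hker₂ : ¬ FiniteDimensional ℂ (LinearMap.ker ((A - lam₂ • (1 : H →L[ℂ] H) : H →L[ℂ] H) : H →ₗ[ℂ] H)))
    (k : ℕ) (c : Fin k → ℝ) (hc : ∀ j, c j ≠ 0) :
    {z : ℂ | ∃ x : Fin k → H, Orthonormal ℂ x ∧
        z = ∑ j, (c j : ℂ) * (inner ℂ (x j) (A (x j)) : ℂ)} =
      {z : ℂ | ∃ t : ℝ, t ∈ Set.Icc (-1 : ℝ) 1 ∧
        z = μ * ∑ j, (c j : ℂ) +
          (t : ℂ) * ((lam₁ - lam₂) / 2) * ((∑ j, |c j| : ℝ) : ℂ)} :=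
  cNumericalRange_of_normal_quadratic_general A hnormal μ ν lam₁ lam₂ hquad hdisc hsum hprod hker₁
    hker₂ k c
end

section
/- Let p ∈ ℂ with |p| < 1, φ(z) = (p − z)/(1 − conj(p)·z), let m be normalized Haar (arclength) measure on the unit circle 𝕋, let ρ : 𝕋 → (0, ∞) be measurable and positive a.e. with ρ square-integrable, and let μ = m.withDensity(ρ²) be the weighted measure. Suppose T is a bounded linear operator on L²(𝕋, μ) such that for every f ∈ L²(𝕋, μ), T f agrees almost everywhere with f ∘ φ. Then the operator norm of T equals the essential supremum (with respect to m) over t ∈ 𝕋 of √(1 − |p|²)·ρ(φ(t)) / ( |p − t|·ρ(t) ). -/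
/-!
Normalized arclength `m` is pushed forward by the Möbius involution `φ` to the harmonic measure
`P_p m`, where `P_p(t) = (1 - |p|²)/|p - t|²` is the Poisson kernel: both measures live on the
circle and have moments `∫ zⁿ = pⁿ` (by the mean value property and the Poisson formula
respectively), and a finite measure on the circle is determined by its Fourier coefficients.
As `φ ∘ φ = id`, the substitution `s = φ t` then gives `‖C_φ f‖² = ∫ |f|² w² dμ` for the weight
`w` inside the essential supremum, and an operator with this property has norm `ess sup w`:
test it against indicators of sets of finite positive measure on which `w` is large.
-/

open MeasureTheory Complex Set
open scoped Real ENNReal ComplexConjugate BoundedContinuousFunction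

noncomputable section

theorem lintegral_comp_withDensity_of_map_eq_withDensity {α : Type*} [MeasurableSpace α]
    {m : Measure α} {Φ : α → α} (hΦ : Measurable Φ) (hinv : ∀ᵐ t ∂m, Φ (Φ t) = t)
    {K D W : α → ℝ≥0∞} (hK : Measurable K) (hD : Measurable D) (hW : Measurable W)
    (hmap : m.map Φ = m.withDensity K) (hKDW : ∀ᵐ t ∂m, K t * D (Φ t) = W t * D t)
    {g : α → ℝ≥0∞} (hg : Measurable g) :
    ∫⁻ t, g (Φ t) ∂m.withDensity D = ∫⁻ t, W t * g t ∂m.withDensity D := by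
  have hD' {h : α → ℝ≥0∞} (hh : Measurable h) :
      ∫⁻ t, h t ∂m.withDensity D = ∫⁻ t, D t * h t ∂m :=
    lintegral_withDensity_eq_lintegral_mul _ hD hh
  calc ∫⁻ t, g (Φ t) ∂m.withDensity D
      = ∫⁻ t, D (Φ (Φ t)) * g (Φ t) ∂m := by
        rw [hD' (h := fun t => g (Φ t)) (hg.comp hΦ)]
        exact lintegral_congr_ae (hinv.mono fun t ht => by simp only [ht])
    _ = ∫⁻ t, K t * (D (Φ t) * g t) ∂m := by
        rw [← lintegral_map (f := fun t => D (Φ t) * g t) ((hD.comp hΦ).mul hg) hΦ, hmap]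
        exact lintegral_withDensity_eq_lintegral_mul _ hK ((hD.comp hΦ).mul hg)
    _ = ∫⁻ t, W t * g t ∂m.withDensity D := by
        rw [hD' (h := fun t => W t * g t) (hW.mul hg)]
        refine lintegral_congr_ae (hKDW.mono fun t ht => ?_)
        simp only
        rw [← mul_assoc, ht, mul_comm (W t), mul_assoc]

lemma essSup_withDensity_eq {α β : Type*} [MeasurableSpace α] [CompleteLattice β]
    {m : Measure α} {D : α → ℝ≥0∞} (hD : Measurable D) (hD_pos : ∀ᵐ x ∂m, D x ≠ 0)
    (f : α → β) : essSup f (m.withDensity D) = essSup f m :=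
  le_antisymm (essSup_mono_measure (withDensity_absolutelyContinuous m D))
    (essSup_mono_measure (withDensity_absolutelyContinuous' hD.aemeasurable hD_pos))

section OperatorNorm

variable {α E 𝕜 : Type*} [MeasurableSpace α] {μ : Measure α} [NormedAddCommGroup E]
  [NontriviallyNormedField 𝕜] [NormedSpace 𝕜 E]

lemma MeasureTheory.Lp.enorm_sq_eq_lintegral (f : Lp E 2 μ) :
    ‖f‖ₑ ^ 2 = ∫⁻ x, ‖f x‖ₑ ^ 2 ∂μ := by
  have h := eLpNorm_nnreal_pow_eq_lintegral (f := ⇑f) (μ := μ) (p := 2) two_ne_zero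
  norm_num at h
  rw [Lp.enorm_def]
  exact_mod_cast h

variable {w : α → ℝ≥0∞} (T : Lp E 2 μ →L[𝕜] Lp E 2 μ)

lemma ContinuousLinearMap.opENorm_le_essSup_of_lintegral_eq
    (hT : ∀ f : Lp E 2 μ, ∫⁻ x, ‖T f x‖ₑ ^ 2 ∂μ = ∫⁻ x, w x ^ 2 * ‖f x‖ₑ ^ 2 ∂μ) :
    ‖T‖ₑ ≤ essSup w μ := by
  refine T.opENorm_le_bound fun f => (ENNReal.pow_le_pow_left_iff two_ne_zero).1 ?_
  calc ‖T f‖ₑ ^ 2 = ∫⁻ x, w x ^ 2 * ‖f x‖ₑ ^ 2 ∂μ := by rw [Lp.enorm_sq_eq_lintegral, hT]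
    _ ≤ ∫⁻ x, essSup w μ ^ 2 * ‖f x‖ₑ ^ 2 ∂μ :=
        lintegral_mono_ae ((ENNReal.ae_le_essSup w).mono fun x hx => by gcongr)
    _ = (essSup w μ * ‖f‖ₑ) ^ 2 := by
        rw [lintegral_const_mul'' _ ((Lp.aestronglyMeasurable f).enorm.pow_const 2), mul_pow,
          Lp.enorm_sq_eq_lintegral]

lemma ContinuousLinearMap.essSup_le_opENorm_of_lintegral_eq [SigmaFinite μ] [Nontrivial E]
    (hw : Measurable w)
    (hT : ∀ f : Lp E 2 μ, ∫⁻ x, ‖T f x‖ₑ ^ 2 ∂μ = ∫⁻ x, w x ^ 2 * ‖f x‖ₑ ^ 2 ∂μ) :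
    essSup w μ ≤ ‖T‖ₑ := by
  refine ENNReal.le_of_forall_nnreal_lt fun r hr => ?_
  have hS : MeasurableSet {x | ↑r < w x} := measurableSet_lt measurable_const hw
  have hμS : 0 < μ {x | ↑r < w x} := by
    refine pos_iff_ne_zero.2 fun h => hr.not_ge (essSup_le_of_ae_le _ ?_)
    rw [Filter.EventuallyLE, ae_iff]
    simpa using h
  obtain ⟨A, hA, hAS, hμA, hμA_top⟩ := Measure.exists_subset_measure_lt_top hS hμS
  obtain ⟨c, hc⟩ := exists_ne (0 : E)
  set g := indicatorConstLp 2 hA hμA_top.ne c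
  have hg : ‖g‖ₑ ≠ 0 := by
    refine enorm_ne_zero.2 (norm_pos_iff.1 ?_)
    rw [norm_indicatorConstLp' two_ne_zero hμA.ne']
    exact mul_pos (norm_pos_iff.2 hc)
      (Real.rpow_pos_of_pos (ENNReal.toReal_pos hμA.ne' hμA_top.ne) _)
  have hg_zero : ∀ᵐ x ∂μ, x ∉ A → g x = 0 := indicatorConstLp_coeFn_notMem
  have hTg : (↑r * ‖g‖ₑ) ^ 2 ≤ (‖T‖ₑ * ‖g‖ₑ) ^ 2 := by
    calc (↑r * ‖g‖ₑ) ^ 2 = ∫⁻ x, ↑r ^ 2 * ‖g x‖ₑ ^ 2 ∂μ := by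
          rw [mul_pow, Lp.enorm_sq_eq_lintegral, lintegral_const_mul' _ _ (by simp)]
      _ ≤ ∫⁻ x, w x ^ 2 * ‖g x‖ₑ ^ 2 ∂μ := by
          refine lintegral_mono_ae (hg_zero.mono fun x hx => ?_)
          by_cases hxA : x ∈ A
          · gcongr; exact (hAS hxA).le
          · simp [hx hxA]
      _ = ‖T g‖ₑ ^ 2 := by rw [Lp.enorm_sq_eq_lintegral, hT]
      _ ≤ (‖T‖ₑ * ‖g‖ₑ) ^ 2 := by gcongr; exact T.le_opENorm g
  exact (ENNReal.mul_le_mul_iff_left hg enorm_ne_top).1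
    ((ENNReal.pow_le_pow_left_iff two_ne_zero).1 hTg)

theorem ContinuousLinearMap.opENorm_eq_essSup_of_lintegral_eq [SigmaFinite μ] [Nontrivial E]
    (hw : Measurable w)
    (hT : ∀ f : Lp E 2 μ, ∫⁻ x, ‖T f x‖ₑ ^ 2 ∂μ = ∫⁻ x, w x ^ 2 * ‖f x‖ₑ ^ 2 ∂μ) :
    ‖T‖ₑ = essSup w μ :=
  le_antisymm (T.opENorm_le_essSup_of_lintegral_eq hT) (T.essSup_le_opENorm_of_lintegral_eq hw hT)

end OperatorNorm

theorem AddCircle.measure_ext_of_integral_fourier_eq {T : ℝ} [Fact (0 < T)]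
    {μ ν : Measure (AddCircle T)} [IsFiniteMeasure μ] [IsFiniteMeasure ν]
    (h : ∀ n : ℤ, ∫ x, fourier n x ∂μ = ∫ x, fourier n x ∂ν) : μ = ν := by
  have hint (f : C(AddCircle T, ℂ)) (σ : Measure (AddCircle T)) [IsFiniteMeasure σ] :
      Integrable f σ :=
    f.continuous.integrable_of_hasCompactSupport (.of_compactSpace f)
  have hspan : ∀ f ∈ Submodule.span ℂ (range (@fourier T)), ∫ x, f x ∂μ = ∫ x, f x ∂ν := by
    intro f hf
    induction hf using Submodule.span_induction with
    | mem f hf => obtain ⟨n, rfl⟩ := hf; exact h n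
    | zero => simp
    | add f₁ f₂ _ _ h₁ h₂ =>
      simp only [ContinuousMap.add_apply]
      rw [integral_add (hint _ _) (hint _ _), integral_add (hint _ _) (hint _ _), h₁, h₂]
    | smul c f _ hf => simp only [ContinuousMap.smul_apply, smul_eq_mul, integral_const_mul, hf]
  let A : StarSubalgebra ℂ (AddCircle T →ᵇ ℂ) :=
    fourierSubalgebra.comap (BoundedContinuousFunction.toContinuousMapStarₐ ℂ)
  refine ext_of_forall_mem_subalgebra_integral_eq_of_polish (A := A) ?_ fun g hg => ?_
  · intro x y hxy
    obtain ⟨_, ⟨f, hf, rfl⟩, hfxy⟩ := fourierSubalgebra_separatesPoints hxy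
    exact ⟨f, ⟨f, ⟨BoundedContinuousFunction.mkOfCompact f, hf, rfl⟩, rfl⟩, hfxy⟩
  · exact hspan g.toContinuousMap (by rw [← fourierSubalgebra_coe]; exact hg)

namespace Complex

lemma fourier_arg {z : ℂ} (hz : ‖z‖ = 1) (n : ℤ) :
    fourier n (arg z : AddCircle (2 * π)) = z ^ n := by
  have h := norm_mul_exp_arg_mul_I z
  rw [hz, ofReal_one, one_mul] at h
  rw [fourier_coe_apply]
  conv_rhs => rw [← h, ← exp_int_mul]
  congr 1
  field_simp
  push_cast
  ring

lemma integral_zpow_eq_of_integral_pow_eq {μ ν : Measure ℂ} (hμ : ∀ᵐ z ∂μ, ‖z‖ = 1)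
    (hν : ∀ᵐ z ∂ν, ‖z‖ = 1) (h : ∀ n : ℕ, ∫ z, z ^ n ∂μ = ∫ z, z ^ n ∂ν) (n : ℤ) :
    ∫ z, z ^ n ∂μ = ∫ z, z ^ n ∂ν := by
  have hneg : ∀ σ : Measure ℂ, (∀ᵐ z ∂σ, ‖z‖ = 1) → ∀ k : ℕ,
      ∫ z, z ^ Int.negSucc k ∂σ = conj (∫ z, z ^ (k + 1) ∂σ) := fun σ hσ k => by
    rw [← integral_conj]
    refine integral_congr_ae (hσ.mono fun z hz => ?_)
    dsimp only
    rw [zpow_negSucc, inv_eq_conj (by rw [norm_pow, hz, one_pow])]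
  cases n with
  | ofNat k => exact_mod_cast h k
  | negSucc k => rw [hneg μ hμ, hneg ν hν, h]

theorem measure_ext_of_integral_pow_eq {μ ν : Measure ℂ} [IsFiniteMeasure μ]
    [IsFiniteMeasure ν] (hμ : ∀ᵐ z ∂μ, ‖z‖ = 1) (hν : ∀ᵐ z ∂ν, ‖z‖ = 1)
    (h : ∀ n : ℕ, ∫ z, z ^ n ∂μ = ∫ z, z ^ n ∂ν) : μ = ν := by
  have : Fact (0 < 2 * π) := ⟨Real.two_pi_pos⟩
  -- `arg` carries a measure on the circle to `AddCircle (2π)`, turning `zⁿ` into `fourier n`.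
  let q : ℂ → AddCircle (2 * π) := fun z => (arg z : AddCircle (2 * π))
  have hq : Measurable q := AddCircle.measurable_mk'.comp measurable_arg
  have hfourier : ∀ σ : Measure ℂ, (∀ᵐ z ∂σ, ‖z‖ = 1) → ∀ n : ℤ,
      ∫ x, fourier n x ∂σ.map q = ∫ z, z ^ n ∂σ := fun σ hσ n => by
    rw [integral_map hq.aemeasurable (fourier n).continuous.aestronglyMeasurable]
    exact integral_congr_ae (hσ.mono fun z hz => fourier_arg hz n)
  have hback : ∀ σ : Measure ℂ, (∀ᵐ z ∂σ, ‖z‖ = 1) →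
      (σ.map q).map (fun x => fourier 1 x) = σ := fun σ hσ => by
    rw [Measure.map_map (fourier 1).continuous.measurable hq]
    conv_rhs => rw [← Measure.map_id (μ := σ)]
    exact Measure.map_congr (hσ.mono fun z hz => by simpa using fourier_arg hz 1)
  have hq_eq : μ.map q = ν.map q := AddCircle.measure_ext_of_integral_fourier_eq fun n => by
    rw [hfourier μ hμ, hfourier ν hν, integral_zpow_eq_of_integral_pow_eq hμ hν h]
  rw [← hback μ hμ, ← hback ν hν, hq_eq]

end Complex

def unitCircleMeasure : Measure ℂ :=
  (ENNReal.ofReal (2 * π))⁻¹ •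
    Measure.map (fun θ : ℝ => exp (θ * I)) (volume.restrict (Ioc 0 (2 * π)))

namespace unitCircleMeasure

lemma measurable_exp_mul_I : Measurable fun θ : ℝ => exp (θ * I) := by fun_prop

lemma ofReal_two_pi_inv_ne_zero : (ENNReal.ofReal (2 * π))⁻¹ ≠ 0 :=
  ENNReal.inv_ne_zero.2 ENNReal.ofReal_ne_top

instance : IsProbabilityMeasure unitCircleMeasure := by
  constructor
  rw [unitCircleMeasure, Measure.smul_apply, Measure.map_apply measurable_exp_mul_I .univ]
  simp only [preimage_univ, Measure.restrict_apply_univ, Real.volume_Ioc, sub_zero, smul_eq_mul]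
  exact ENNReal.inv_mul_cancel (by positivity) ENNReal.ofReal_ne_top

lemma ae_norm_eq_one : ∀ᵐ z ∂unitCircleMeasure, ‖z‖ = 1 := by
  have : MeasurableSet {z : ℂ | ‖z‖ = 1} := measurableSet_eq_fun (by fun_prop) (by fun_prop)
  rw [unitCircleMeasure, Measure.ae_ennreal_smul_measure_eq ofReal_two_pi_inv_ne_zero,
    ae_map_iff measurable_exp_mul_I.aemeasurable this]
  exact .of_forall fun θ => norm_exp_ofReal_mul_I θ

lemma integral_eq_circleAverage {E : Type*} [NormedAddCommGroup E] [NormedSpace ℂ E]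
    {g : ℂ → E} (hg : StronglyMeasurable g) :
    ∫ z, g z ∂unitCircleMeasure = Real.circleAverage g 0 1 := by
  rw [unitCircleMeasure, integral_smul_measure, integral_map measurable_exp_mul_I.aemeasurable
    hg.aestronglyMeasurable, Real.circleAverage_def,
    intervalIntegral.integral_of_le (by positivity)]
  simp [circleMap_zero, ENNReal.toReal_inv, Real.pi_pos.le]

end unitCircleMeasure

def mobius (p z : ℂ) : ℂ := (p - z) / (1 - conj p * z)

section mobius

variable {p z : ℂ}

lemma one_sub_conj_mul_ne_zero (hp : ‖p‖ < 1) (hz : ‖z‖ ≤ 1) : 1 - conj p * z ≠ 0 := by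
  refine sub_ne_zero.2 fun h => ?_
  have : ‖conj p * z‖ < 1 := by
    rw [norm_mul, norm_conj]
    nlinarith [norm_nonneg p, norm_nonneg z]
  simp [← h] at this

lemma sub_ne_zero_of_norm_lt_one_of_norm_eq_one (hp : ‖p‖ < 1) (hz : ‖z‖ = 1) : p - z ≠ 0 :=
  sub_ne_zero.2 fun h => by simp [h, hz] at hp

lemma norm_one_sub_conj_mul (hz : ‖z‖ = 1) : ‖1 - conj p * z‖ = ‖p - z‖ := by
  have hzz : conj z * z = 1 := by rw [conj_mul', hz]; simp
  calc ‖1 - conj p * z‖ = ‖conj (p - z) * z‖ := by rw [map_sub, sub_mul, hzz, norm_sub_rev]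
    _ = ‖p - z‖ := by rw [norm_mul, norm_conj, hz, mul_one]

lemma norm_mobius (hp : ‖p‖ < 1) (hz : ‖z‖ = 1) : ‖mobius p z‖ = 1 := by
  rw [mobius, norm_div, norm_one_sub_conj_mul hz,
    div_self (norm_ne_zero_iff.2 (sub_ne_zero_of_norm_lt_one_of_norm_eq_one hp hz))]

lemma mobius_mobius (hp : ‖p‖ < 1) (hz : ‖z‖ ≤ 1) : mobius p (mobius p z) = z := by
  have h₁ := one_sub_conj_mul_ne_zero hp hz
  have h₂ : 1 - conj p * p ≠ 0 := one_sub_conj_mul_ne_zero hp hp.le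
  have hnum : p - mobius p z = z * (1 - conj p * p) / (1 - conj p * z) := by
    rw [mobius, eq_div_iff h₁, sub_mul, div_mul_cancel₀ _ h₁]; ring
  have hden : 1 - conj p * mobius p z = (1 - conj p * p) / (1 - conj p * z) := by
    rw [mobius, eq_div_iff h₁, sub_mul, mul_assoc, div_mul_cancel₀ _ h₁]; ring
  rw [mobius, hnum, hden, div_div_div_cancel_right₀ h₁, mul_div_cancel_right₀ _ h₂]

lemma mobius_zero : mobius p 0 = p := by simp [mobius]

@[fun_prop]
lemma measurable_mobius : Measurable (mobius p) := by unfold mobius; fun_prop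

lemma differentiableOn_mobius (hp : ‖p‖ < 1) :
    DifferentiableOn ℂ (mobius p) (Metric.closedBall 0 1) := by
  refine DifferentiableOn.div (by fun_prop) (by fun_prop) fun z hz => ?_
  exact one_sub_conj_mul_ne_zero hp (by simpa using hz)

end mobius

section Poisson

variable {p z : ℂ}

@[fun_prop]
lemma measurable_poissonKernel (c w : ℂ) : Measurable (poissonKernel c w) := by
  unfold poissonKernel; fun_prop

lemma poissonKernel_zero_of_norm_eq_one (hz : ‖z‖ = 1) :
    poissonKernel 0 p z = (1 - ‖p‖ ^ 2) / ‖p - z‖ ^ 2 := by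
  simp [poissonKernel_def, hz, norm_sub_rev]

lemma poissonKernel_zero_nonneg (hp : ‖p‖ < 1) (hz : ‖z‖ = 1) : 0 ≤ poissonKernel 0 p z := by
  rw [poissonKernel_zero_of_norm_eq_one hz]
  have : ‖p‖ ^ 2 < 1 := by nlinarith [norm_nonneg p]
  positivity

lemma poissonKernel_zero_le (hp : ‖p‖ < 1) (hz : ‖z‖ = 1) :
    poissonKernel 0 p z ≤ (1 - ‖p‖ ^ 2) / (1 - ‖p‖) ^ 2 := by
  rw [poissonKernel_zero_of_norm_eq_one hz]
  have hsub : 1 - ‖p‖ ≤ ‖p - z‖ := by simpa [hz, norm_sub_rev] using norm_sub_norm_le z p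
  gcongr
  nlinarith [norm_nonneg p]

lemma ofReal_poissonKernel_zero_mul_sq (hp : ‖p‖ < 1) (hz : ‖z‖ = 1) {a b : ℝ} (ha : 0 < a)
    (hb : 0 ≤ b) :
    ENNReal.ofReal (poissonKernel 0 p z) * ENNReal.ofReal (b ^ 2) =
      ENNReal.ofReal (√(1 - ‖p‖ ^ 2) * b / (‖p - z‖ * a)) ^ 2 * ENNReal.ofReal (a ^ 2) := by
  have hpz : ‖p - z‖ ≠ 0 := norm_ne_zero_iff.2 (sub_ne_zero_of_norm_lt_one_of_norm_eq_one hp hz)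
  rw [← ENNReal.ofReal_mul (poissonKernel_zero_nonneg hp hz), ← ENNReal.ofReal_pow
    (by positivity), ← ENNReal.ofReal_mul (by positivity), poissonKernel_zero_of_norm_eq_one hz,
    div_pow, mul_pow, mul_pow, Real.sq_sqrt (by nlinarith [norm_nonneg p])]
  congr 1
  field_simp

def harmonicMeasure (p : ℂ) : Measure ℂ :=
  unitCircleMeasure.withDensity fun z => ENNReal.ofReal (poissonKernel 0 p z)

lemma isFiniteMeasure_harmonicMeasure (hp : ‖p‖ < 1) : IsFiniteMeasure (harmonicMeasure p) := by
  refine isFiniteMeasure_withDensity_ofReal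
    (HasFiniteIntegral.of_bounded (C := (1 - ‖p‖ ^ 2) / (1 - ‖p‖) ^ 2) ?_)
  filter_upwards [unitCircleMeasure.ae_norm_eq_one] with z hz
  rw [Real.norm_of_nonneg (poissonKernel_zero_nonneg hp hz)]
  exact poissonKernel_zero_le hp hz

lemma harmonicMeasure_ae_norm_eq_one : ∀ᵐ z ∂harmonicMeasure p, ‖z‖ = 1 :=
  (withDensity_absolutelyContinuous _ _).ae_le unitCircleMeasure.ae_norm_eq_one

lemma integral_pow_harmonicMeasure (hp : ‖p‖ < 1) (n : ℕ) :
    ∫ z, z ^ n ∂harmonicMeasure p = p ^ n := by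
  have hae : (fun z => (ENNReal.ofReal (poissonKernel 0 p z)).toReal • z ^ n)
      =ᵐ[unitCircleMeasure] poissonKernel 0 p • fun z => z ^ n := by
    filter_upwards [unitCircleMeasure.ae_norm_eq_one] with z hz
    rw [ENNReal.toReal_ofReal (poissonKernel_zero_nonneg hp hz), Pi.smul_apply']
  rw [harmonicMeasure, integral_withDensity_eq_integral_toReal_smul (by fun_prop)
      (.of_forall fun _ => ENNReal.ofReal_lt_top), integral_congr_ae hae,
    unitCircleMeasure.integral_eq_circleAverage (by fun_prop)]
  exact (differentiable_pow n).diffContOnCl.circleAverage_poissonKernel_smul (by simpa using hp)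

lemma integral_pow_map_mobius_unitCircleMeasure (hp : ‖p‖ < 1) (n : ℕ) :
    ∫ z, z ^ n ∂unitCircleMeasure.map (mobius p) = p ^ n := by
  have hd : DiffContOnCl ℂ (fun z => mobius p z ^ n) (Metric.ball 0 |1|) :=
    DifferentiableOn.diffContOnCl (by
      rw [abs_one, closure_ball _ one_ne_zero]; exact (differentiableOn_mobius hp).pow n)
  rw [integral_map measurable_mobius.aemeasurable (by fun_prop),
    unitCircleMeasure.integral_eq_circleAverage (by fun_prop), hd.circleAverage, mobius_zero]

lemma ae_norm_eq_one_map_mobius_unitCircleMeasure (hp : ‖p‖ < 1) :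
    ∀ᵐ z ∂unitCircleMeasure.map (mobius p), ‖z‖ = 1 := by
  rw [ae_map_iff measurable_mobius.aemeasurable (measurableSet_eq_fun (by fun_prop) (by fun_prop))]
  filter_upwards [unitCircleMeasure.ae_norm_eq_one] with z hz using norm_mobius hp hz

theorem map_mobius_unitCircleMeasure (hp : ‖p‖ < 1) :
    unitCircleMeasure.map (mobius p) = harmonicMeasure p := by
  have : IsProbabilityMeasure (unitCircleMeasure.map (mobius p)) :=
    Measure.isProbabilityMeasure_map measurable_mobius.aemeasurable
  have := isFiniteMeasure_harmonicMeasure hp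
  refine Complex.measure_ext_of_integral_pow_eq (ae_norm_eq_one_map_mobius_unitCircleMeasure hp)
    harmonicMeasure_ae_norm_eq_one fun n => ?_
  rw [integral_pow_map_mobius_unitCircleMeasure hp, integral_pow_harmonicMeasure hp]

lemma quasiMeasurePreserving_mobius (hp : ‖p‖ < 1) :
    Measure.QuasiMeasurePreserving (mobius p) unitCircleMeasure unitCircleMeasure :=
  ⟨measurable_mobius, (map_mobius_unitCircleMeasure hp).symm ▸ withDensity_absolutelyContinuous _ _⟩

end Poisson

end

theorem norm_compositionOperator_weighted_L2_circle_general
    (p : ℂ) (hp : ‖p‖ < 1)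
    (φ : ℂ → ℂ) (hφ : φ = fun z => (p - z) / (1 - (starRingEnd ℂ) p * z))
    (m : Measure ℂ)
    (hm : m = (ENNReal.ofReal (2 * Real.pi))⁻¹ •
      Measure.map (fun θ : ℝ => Complex.exp (θ * Complex.I))
        (volume.restrict (Set.Ioc (0 : ℝ) (2 * Real.pi))))
    (ρ : ℂ → ℝ) (hρmeas : Measurable ρ) (hρpos : ∀ᵐ t ∂m, 0 < ρ t)
    (μ : Measure ℂ) (hμ : μ = m.withDensity fun t => ENNReal.ofReal (ρ t ^ 2))
    (T : Lp ℂ 2 μ →L[ℂ] Lp ℂ 2 μ)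
    (hT : ∀ f : Lp ℂ 2 μ, (T f : ℂ → ℂ) =ᵐ[μ] fun z => f (φ z)) :
    ENNReal.ofReal ‖T‖ =
      essSup (fun t => ENNReal.ofReal
        (Real.sqrt (1 - ‖p‖ ^ 2) * ρ (φ t) /
          (‖p - t‖ * ρ t))) m := by
  obtain rfl : φ = mobius p := hφ
  obtain rfl : m = unitCircleMeasure := hm
  set w := fun t => ENNReal.ofReal (√(1 - ‖p‖ ^ 2) * ρ (mobius p t) / (‖p - t‖ * ρ t))
  have hweight : ∀ᵐ t ∂unitCircleMeasure,
      ENNReal.ofReal (poissonKernel 0 p t) * ENNReal.ofReal (ρ (mobius p t) ^ 2) =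
        w t ^ 2 * ENNReal.ofReal (ρ t ^ 2) := by
    filter_upwards [unitCircleMeasure.ae_norm_eq_one, hρpos,
      (quasiMeasurePreserving_mobius hp).ae hρpos] with t ht hρt hρφt
    exact ofReal_poissonKernel_zero_mul_sq hp ht hρt hρφt.le
  have hTw (f : Lp ℂ 2 μ) : ∫⁻ x, ‖T f x‖ₑ ^ 2 ∂μ = ∫⁻ x, w x ^ 2 * ‖f x‖ₑ ^ 2 ∂μ := by
    rw [lintegral_congr_ae ((hT f).mono fun x hx => by rw [hx])]
    subst hμ
    exact lintegral_comp_withDensity_of_map_eq_withDensity measurable_mobius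
      (unitCircleMeasure.ae_norm_eq_one.mono fun t ht => mobius_mobius hp ht.le) (by fun_prop)
      (by fun_prop) (by fun_prop) (map_mobius_unitCircleMeasure hp) hweight
      ((Lp.stronglyMeasurable f).measurable.enorm.pow_const 2)
  have hess : essSup w μ = essSup w unitCircleMeasure := by
    subst hμ
    exact essSup_withDensity_eq (by fun_prop) (hρpos.mono fun t ht => by simpa using ht.ne') w
  have : SigmaFinite μ := by subst hμ; infer_instance
  rw [ofReal_norm, ← hess, T.opENorm_eq_essSup_of_lintegral_eq (by fun_prop) hTw]

/-- Norm of the composition operator `C_φ`, `φ(z) = (p - z)/(1 - p̄ z)` with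
`|p| < 1`, on the weighted space `L²(𝕋, ρ² dm)` (`m` = normalized Haar measure
on the unit circle): `‖C_φ‖` equals the `m`-essential supremum of
`√(1-|p|²) ρ(φ(t)) / (|p - t| ρ(t))`. -/
theorem norm_compositionOperator_weighted_L2_circle
    (p : ℂ) (hp : ‖p‖ < 1)
    (φ : ℂ → ℂ) (hφ : φ = fun z => (p - z) / (1 - (starRingEnd ℂ) p * z))
    (m : Measure ℂ)
    (hm : m = (ENNReal.ofReal (2 * Real.pi))⁻¹ •
      Measure.map (fun θ : ℝ => Complex.exp (θ * Complex.I))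
        (volume.restrict (Set.Ioc (0 : ℝ) (2 * Real.pi))))
    (ρ : ℂ → ℝ) (hρmeas : Measurable ρ) (hρpos : ∀ᵐ t ∂m, 0 < ρ t)
    (hρL2 : Integrable (fun t => ρ t ^ 2) m)
    (μ : Measure ℂ) (hμ : μ = m.withDensity fun t => ENNReal.ofReal (ρ t ^ 2))
    (T : Lp ℂ 2 μ →L[ℂ] Lp ℂ 2 μ)
    (hT : ∀ f : Lp ℂ 2 μ, (T f : ℂ → ℂ) =ᵐ[μ] fun z => f (φ z)) :
    ENNReal.ofReal ‖T‖ =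
      essSup (fun t => ENNReal.ofReal
        (Real.sqrt (1 - ‖p‖ ^ 2) * ρ (φ t) /
          (‖p - t‖ * ρ t))) m :=
  norm_compositionOperator_weighted_L2_circle_general p hp φ hφ m hm ρ hρmeas hρpos μ hμ T hT
end
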